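/- arXiv:2207.10284 — 5 statements merged into one kernel-verified Lean document; each statement's English description precedes it below -/
import Mathlib

section
/- Fix a scale s ∈ {1,2,4,…,n} and block indices x, y ∈ {1,…,n/s}. Suppose p, q ∈ [1, ∞] with 1/p + 1/q = 1, and β₁, β₂ ≥ 0 are such that for all index pairs (i₁, j₁), (i₂, j₂) in the support of B^s_{x,y} one has ‖Q_{i₁}‖_p ≤ β₁, ‖Q_{i₂}‖_p ≤ β₁, ‖K_{j₁}‖_p ≤ β₁, ‖K_{j₂}‖_p ≤ β₁, ‖Q_{i₁} − Q_{i₂}‖_q ≤ β₂, and ‖K_{j₁} − K_{j₂}‖_q ≤ β₂. Then, with r = 2β₁β₂, there exists a ∈ ℝ such that P_{i,j} ∈ [a, a + r] for all (i, j) in the support of B^s_{x,y}, and moreover 0 ≤ μ*_{s,x,y} − μ_{s,x,y} ≤ C_r · μ_{s,x,y}, where C_r = 1 + exp(r) − 2 exp(r/2). -/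
/-!
By Hölder, `P i j - P i' j' = ⟪Q i, K j - K j'⟫ + ⟪Q i - Q i', K j'⟫ ≤ 2 β₁ β₂` on the block, so
its entries lie in an interval `[a, a + r]`. With uniform weights on the block, `μ*` is the mean
of `exp` over these entries and `μ` is `exp` of their mean `m`, so Jensen gives `μ ≤ μ*`.
Conversely `exp` lies below its secant on `[a, a + r]`, so `μ*` is at most the secant at `m`.
Writing `m = a + τ r`, the ratio of secant to `exp` at `m` is `(1 + τ (eʳ - 1)) e^{-τ r}`;
bounding `e^{-τ r}` by its own secant turns this into `1 + τ (1 - τ) (e^{r/2} - e^{-r/2})²`,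
which is at most `1 + (e^{r/2} - 1)² = 1 + C_r`.
-/

open scoped ENNReal BigOperators

/-- ℓ_p norm (p ∈ [1,∞]) of a vector in ℝ^d, via the `PiLp` norm. -/
noncomputable def lpNorm (p : ℝ≥0∞) {d : ℕ} (v : Fin d → ℝ) : ℝ :=
  ‖(WithLp.equiv p (∀ _ : Fin d, ℝ)).symm v‖

/-- The block component `B^s_{x,y}` (0-based block indices `x, y`): the (i,j) entry is 1
if `i` lies in the x-th length-s block and `j` lies in the y-th length-s block, else 0. -/
def blockMat (n s x y : ℕ) : Matrix (Fin n) (Fin n) ℝ :=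
  Matrix.of fun i j => if i.val / s = x ∧ j.val / s = y then (1 : ℝ) else 0

/-- Frobenius (entrywise) inner product of two matrices. -/
noncomputable def frobInner {n : ℕ} (M N : Matrix (Fin n) (Fin n) ℝ) : ℝ :=
  ∑ i, ∑ j, M i j * N i j

open Finset Real

theorem abs_dotProduct_le_lpNorm_mul_lpNorm {d : ℕ} {p q : ℝ≥0∞} [p.HolderConjugate q]
    (u v : Fin d → ℝ) : |u ⬝ᵥ v| ≤ lpNorm p u * lpNorm q v := by
  have : Fact (1 ≤ p) := ⟨ENNReal.HolderConjugate.one_le p q⟩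
  have : Fact (1 ≤ q) := ⟨ENNReal.HolderConjugate.one_le q p⟩
  let B : Fin d → ℝ →L[ℝ] ℝ →L[ℝ] ℝ := fun _ => ContinuousLinearMap.mul ℝ ℝ
  have hB : ∀ k, ‖B k‖ ≤ (1 : NNReal) := fun _ => by simp [B]
  have h := (lp.dualPairing p q B hB).le_of_opNorm₂_le_of_le (lp.norm_dualPairing B hB)
    le_rfl le_rfl (x := (lpPiLpₗᵢ _ ℝ).symm (WithLp.toLp p u))
    (y := (lpPiLpₗᵢ _ ℝ).symm (WithLp.toLp q v))
  rw [lp.dualPairing_apply, tsum_fintype] at h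
  simpa [B, lpNorm, dotProduct, coe_lpPiLpₗᵢ_symm] using h

theorem abs_dotProduct_le_of_lpNorm_le {d : ℕ} {p q : ℝ≥0∞} [p.HolderConjugate q]
    {u v : Fin d → ℝ} {b c : ℝ} (hu : lpNorm p u ≤ b) (hv : lpNorm q v ≤ c) :
    |u ⬝ᵥ v| ≤ b * c := by
  have : Fact (1 ≤ p) := ⟨ENNReal.HolderConjugate.one_le p q⟩
  have : Fact (1 ≤ q) := ⟨ENNReal.HolderConjugate.one_le q p⟩
  have hu₀ : 0 ≤ lpNorm p u := norm_nonneg _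
  have hv₀ : 0 ≤ lpNorm q v := norm_nonneg _
  exact (abs_dotProduct_le_lpNorm_mul_lpNorm u v).trans (mul_le_mul hu hv hv₀ (hu₀.trans hu))

theorem dotProduct_sub_dotProduct_le {d : ℕ} {p q : ℝ≥0∞} [p.HolderConjugate q]
    {u u' v v' : Fin d → ℝ} {β₁ β₂ : ℝ} (hu : lpNorm p u ≤ β₁) (hv' : lpNorm p v' ≤ β₁)
    (hdu : lpNorm q (u - u') ≤ β₂) (hdv : lpNorm q (v - v') ≤ β₂) :
    u ⬝ᵥ v - u' ⬝ᵥ v' ≤ 2 * β₁ * β₂ := by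
  have h₁ := abs_dotProduct_le_of_lpNorm_le hu hdv
  have h₂ := abs_dotProduct_le_of_lpNorm_le hdu hv'
  calc u ⬝ᵥ v - u' ⬝ᵥ v' = u ⬝ᵥ (v - v') + (u - u') ⬝ᵥ v' := by
        simp only [dotProduct_sub, sub_dotProduct]; ring
    _ ≤ β₁ * β₂ + β₂ * β₁ := add_le_add (le_abs_self _ |>.trans h₁) (le_abs_self _ |>.trans h₂)
    _ = 2 * β₁ * β₂ := by ring

theorem Finset.exists_forall_mem_Icc_of_sub_le {ι : Type*} {s : Finset ι} {f : ι → ℝ} {r : ℝ}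
    (h : ∀ i ∈ s, ∀ j ∈ s, f i - f j ≤ r) : ∃ a, ∀ i ∈ s, f i ∈ Set.Icc a (a + r) := by
  rcases s.eq_empty_or_nonempty with rfl | hs
  · exact ⟨0, by simp⟩
  obtain ⟨j, hj, hmin⟩ := s.exists_min_image f hs
  exact ⟨f j, fun i hi => ⟨hmin i hi, by linarith [h i hi j hj]⟩⟩

theorem Real.exp_mul_le_one_add_mul {τ : ℝ} (h₀ : 0 ≤ τ) (h₁ : τ ≤ 1) (u : ℝ) :
    exp (τ * u) ≤ 1 + τ * (exp u - 1) := by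
  have h := convexOn_exp.2 (Set.mem_univ 0) (Set.mem_univ u) (sub_nonneg.2 h₁) h₀ (by ring)
  simp only [smul_eq_mul, mul_zero, zero_add, exp_zero, mul_one] at h
  linarith

theorem Real.one_add_mul_exp_sub_one_le {τ r : ℝ} (h₀ : 0 ≤ τ) (h₁ : τ ≤ 1) (hr : 0 ≤ r) :
    1 + τ * (exp r - 1) ≤ (2 + exp r - 2 * exp (r / 2)) * exp (τ * r) := by
  set H := exp (r / 2)
  set G := exp (-(r / 2))
  have hHG : H * G = 1 := by rw [← exp_add, add_neg_cancel, exp_zero]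
  have hH : 1 ≤ H := one_le_exp (by linarith)
  have hexp : exp r = H ^ 2 := by rw [← exp_nat_mul]; ring_nf
  have hexp' : exp (-r) = G ^ 2 := by rw [← exp_nat_mul]; ring_nf
  have hchord : exp (-(τ * r)) ≤ 1 + τ * (G ^ 2 - 1) := by
    simpa [hexp'] using exp_mul_le_one_add_mul h₀ h₁ (-r)
  have hprod :
      (1 + τ * (H ^ 2 - 1)) * (1 + τ * (G ^ 2 - 1)) = 1 + τ * (1 - τ) * (H - G) ^ 2 := by
    linear_combination (2 * τ + τ ^ 2 * (H * G - 1)) * hHG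
  have hG : G ≤ 1 := by nlinarith
  have hHG₂ : 2 ≤ H + G := by nlinarith [mul_nonneg (exp_pos (-(r / 2))).le (sq_nonneg (H - 1))]
  have hquarter : τ * (1 - τ) * (H - G) ^ 2 ≤ (H - 1) ^ 2 := by
    have hτ : τ * (1 - τ) ≤ 1 / 4 := by nlinarith [sq_nonneg (2 * τ - 1)]
    have hsq : (H - G) ^ 2 ≤ 4 * (H - 1) ^ 2 := by nlinarith
    nlinarith [mul_nonneg h₀ (sub_nonneg.2 h₁), sq_nonneg (H - G)]
  calc 1 + τ * (exp r - 1)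
      = (1 + τ * (H ^ 2 - 1)) * exp (-(τ * r)) * exp (τ * r) := by
        rw [hexp, mul_assoc, ← exp_add, neg_add_cancel, exp_zero, mul_one]
    _ ≤ (1 + τ * (H ^ 2 - 1)) * (1 + τ * (G ^ 2 - 1)) * exp (τ * r) := by
        gcongr
        nlinarith
    _ ≤ (2 + exp r - 2 * exp (r / 2)) * exp (τ * r) := by
        rw [hprod, hexp]
        gcongr
        nlinarith

/-- The secant of `exp` over `[a, a + r]`; for `r = 0` it is the constant `exp a`, as `x / 0 = 0`.
-/
noncomputable def expSecant (a r t : ℝ) : ℝ := exp a * (1 + (t - a) / r * (exp r - 1))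

section Secant

variable {a r t : ℝ}

theorem sub_div_mem_Icc_of_mem_Icc (ht : t ∈ Set.Icc a (a + r)) :
    (t - a) / r ∈ Set.Icc (0 : ℝ) 1 := by
  obtain ⟨h₁, h₂⟩ := ht
  rcases (show 0 ≤ r by linarith).eq_or_lt with rfl | hr
  · simp
  · exact ⟨div_nonneg (by linarith) hr.le, (div_le_one hr).2 (by linarith)⟩

theorem add_sub_div_mul_of_mem_Icc (ht : t ∈ Set.Icc a (a + r)) : a + (t - a) / r * r = t := by
  obtain ⟨h₁, h₂⟩ := ht
  rcases (show 0 ≤ r by linarith).eq_or_lt with rfl | hr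
  · rw [mul_zero, add_zero]; linarith
  · rw [div_mul_cancel₀ _ hr.ne']; ring

theorem exp_le_expSecant (ht : t ∈ Set.Icc a (a + r)) : exp t ≤ expSecant a r t := by
  obtain ⟨hτ₀, hτ₁⟩ := sub_div_mem_Icc_of_mem_Icc ht
  calc exp t = exp a * exp ((t - a) / r * r) := by rw [← exp_add, add_sub_div_mul_of_mem_Icc ht]
    _ ≤ exp a * (1 + (t - a) / r * (exp r - 1)) := by
      gcongr
      exact exp_mul_le_one_add_mul hτ₀ hτ₁ r

theorem expSecant_le (ht : t ∈ Set.Icc a (a + r)) :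
    expSecant a r t ≤ (2 + exp r - 2 * exp (r / 2)) * exp t := by
  obtain ⟨hτ₀, hτ₁⟩ := sub_div_mem_Icc_of_mem_Icc ht
  calc exp a * (1 + (t - a) / r * (exp r - 1))
      ≤ exp a * ((2 + exp r - 2 * exp (r / 2)) * exp ((t - a) / r * r)) := by
        gcongr
        exact one_add_mul_exp_sub_one_le hτ₀ hτ₁ (by linarith [ht.1, ht.2])
    _ = (2 + exp r - 2 * exp (r / 2)) * exp t := by
        rw [mul_left_comm, ← exp_add, add_sub_div_mul_of_mem_Icc ht]

theorem sum_mul_expSecant {ι : Type*} {s : Finset ι} {w t : ι → ℝ} (hw : ∑ i ∈ s, w i = 1)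
    (a r : ℝ) : ∑ i ∈ s, w i * expSecant a r (t i) = expSecant a r (∑ i ∈ s, w i * t i) := by
  have h : ∀ i, w i * expSecant a r (t i)
      = w i * exp a + exp a * (exp r - 1) / r * (w i * t i - w i * a) := by
    intro i; simp only [expSecant]; ring
  rw [sum_congr rfl fun i _ => h i, sum_add_distrib, ← sum_mul, ← mul_sum, sum_sub_distrib,
    ← sum_mul, hw]
  simp only [expSecant]
  ring

end Secant

theorem sum_mul_exp_le_of_forall_mem_Icc {ι : Type*} {s : Finset ι} {w t : ι → ℝ} {a r : ℝ}
    (hw₀ : ∀ i ∈ s, 0 ≤ w i) (hw₁ : ∑ i ∈ s, w i = 1) (ht : ∀ i ∈ s, t i ∈ Set.Icc a (a + r)) :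
    ∑ i ∈ s, w i * exp (t i) ≤ (2 + exp r - 2 * exp (r / 2)) * exp (∑ i ∈ s, w i * t i) :=
  calc ∑ i ∈ s, w i * exp (t i) ≤ ∑ i ∈ s, w i * expSecant a r (t i) :=
        sum_le_sum fun i hi => mul_le_mul_of_nonneg_left (exp_le_expSecant (ht i hi)) (hw₀ i hi)
    _ = expSecant a r (∑ i ∈ s, w i * t i) := sum_mul_expSecant hw₁ a r
    _ ≤ _ := expSecant_le ((convex_Icc a (a + r)).sum_mem hw₀ hw₁ ht)

def blockSupport (n s x y : ℕ) : Finset (Fin n × Fin n) :=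
  univ.filter (fun i : Fin n => i.val / s = x) ×ˢ univ.filter (fun j : Fin n => j.val / s = y)

section BlockSupport

variable {n s x y : ℕ}

@[simp]
theorem mem_blockSupport {i j : Fin n} :
    (i, j) ∈ blockSupport n s x y ↔ i.val / s = x ∧ j.val / s = y := by
  simp [blockSupport]

theorem card_filter_div_eq (hx : x < n / s) : #{i : Fin n | i.val / s = x} = s := by
  have hs : 0 < s := Nat.pos_of_ne_zero (by rintro rfl; simp at hx)
  have hxn : s * (x + 1) ≤ n := (Nat.mul_le_mul_left s hx).trans (Nat.mul_div_le n s)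
  have h : ({i : Fin n | i.val / s = x} : Finset (Fin n)).map Fin.valEmbedding =
      Ico (x * s) (x * s + s) := by
    ext m
    simp only [mem_map, mem_filter, mem_univ, true_and, Fin.valEmbedding_apply, mem_Ico]
    constructor
    · rintro ⟨i, hi, rfl⟩
      rw [Nat.div_eq_iff hs] at hi
      omega
    · intro hm
      have hm' : m < n := by nlinarith
      exact ⟨⟨m, hm'⟩, (Nat.div_eq_iff (x := m) hs).2 (by omega), rfl⟩
  rw [← card_map Fin.valEmbedding, h, Nat.card_Ico, Nat.add_sub_cancel_left]

theorem card_blockSupport (hx : x < n / s) (hy : y < n / s) :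
    #(blockSupport n s x y) = s ^ 2 := by
  rw [blockSupport, card_product, card_filter_div_eq hx, card_filter_div_eq hy, sq]

theorem frobInner_blockMat (M : Matrix (Fin n) (Fin n) ℝ) :
    frobInner (blockMat n s x y) M = ∑ ij ∈ blockSupport n s x y, M ij.1 ij.2 := by
  simp [frobInner, blockMat, blockSupport, sum_product, sum_filter, ite_and]

end BlockSupport

theorem mu_approx_error_bound_general
    (n d : ℕ)
    (Q K : Matrix (Fin n) (Fin d) ℝ)
    (P : Matrix (Fin n) (Fin n) ℝ) (hP : P = Q * K.transpose)
    (s : ℕ)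
    (x y : ℕ) (hx : x < n / s) (hy : y < n / s)
    (p q : ℝ≥0∞) (hpq : p⁻¹ + q⁻¹ = 1)
    (β₁ β₂ : ℝ)
    (hQnorm : ∀ i : Fin n, i.val / s = x → lpNorm p (Q i) ≤ β₁)
    (hKnorm : ∀ j : Fin n, j.val / s = y → lpNorm p (K j) ≤ β₁)
    (hQdiff : ∀ i₁ i₂ : Fin n, i₁.val / s = x → i₂.val / s = x →
      lpNorm q (Q i₁ - Q i₂) ≤ β₂)
    (hKdiff : ∀ j₁ j₂ : Fin n, j₁.val / s = y → j₂.val / s = y →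
      lpNorm q (K j₁ - K j₂) ≤ β₂)
    (r : ℝ) (hr : r = 2 * β₁ * β₂)
    (μstar μ : ℝ)
    (hμstar : μstar = (1 / (s : ℝ) ^ 2) *
      frobInner (blockMat n s x y) (Matrix.of fun i j => Real.exp (P i j)))
    (hμ : μ = Real.exp ((1 / (s : ℝ) ^ 2) * frobInner (blockMat n s x y) P)) :
    (∃ a : ℝ, ∀ i j : Fin n, i.val / s = x → j.val / s = y →
        P i j ∈ Set.Icc a (a + r)) ∧
    0 ≤ μstar - μ ∧
    μstar - μ ≤ (1 + Real.exp r - 2 * Real.exp (r / 2)) * μ := by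
  have : p.HolderConjugate q := ENNReal.holderConjugate_iff.2 hpq
  set T := blockSupport n s x y
  have hosc : ∀ ij ∈ T, ∀ ij' ∈ T, P ij.1 ij.2 - P ij'.1 ij'.2 ≤ r := by
    rintro ⟨i, j⟩ hij ⟨i', j'⟩ hij'
    rw [mem_blockSupport] at hij hij'
    simpa [hP, hr, Matrix.mul_apply, dotProduct] using dotProduct_sub_dotProduct_le
      (hQnorm i hij.1) (hKnorm j' hij'.2) (hQdiff i i' hij.1 hij'.1) (hKdiff j j' hij.2 hij'.2)
  obtain ⟨a, ha⟩ := T.exists_forall_mem_Icc_of_sub_le hosc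
  have hs : (s : ℝ) ≠ 0 := Nat.cast_ne_zero.2 (by rintro rfl; simp at hx)
  have hw : ∑ _ ∈ T, 1 / (s : ℝ) ^ 2 = 1 := by
    rw [sum_const, card_blockSupport hx hy, nsmul_eq_mul]; push_cast; field_simp
  rw [frobInner_blockMat, mul_sum] at hμstar hμ
  simp only [Matrix.of_apply] at hμstar
  refine ⟨⟨a, fun i j hi hj => ha (i, j) (mem_blockSupport.2 ⟨hi, hj⟩)⟩, ?_, ?_⟩
  · rw [sub_nonneg, hμ, hμstar]
    simpa using convexOn_exp.map_sum_le (fun _ _ => by positivity) hw fun _ _ => Set.mem_univ _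
  · have := sum_mul_exp_le_of_forall_mem_Icc (fun _ _ => by positivity) hw ha
    rw [← hμ, ← hμstar] at this
    linarith

/-- Lemma 3.1: under ℓ_p/ℓ_q bounds on the rows of `Q` and `K` over the block
`supp(B^s_{x,y})`, the entries of `P = Q Kᵀ` over the block lie in an interval
`[a, a + r]` with `r = 2 β₁ β₂`, and `0 ≤ μ* − μ ≤ C_r μ` with
`C_r = 1 + exp r − 2 exp (r/2)`. -/
theorem mu_approx_error_bound
    (n d : ℕ) (hn : ∃ k : ℕ, n = 2 ^ k)
    (Q K : Matrix (Fin n) (Fin d) ℝ)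
    (P : Matrix (Fin n) (Fin n) ℝ) (hP : P = Q * K.transpose)
    (s : ℕ) (hs : ∃ k : ℕ, s = 2 ^ k) (hsn : s ∣ n)
    (x y : ℕ) (hx : x < n / s) (hy : y < n / s)
    (p q : ℝ≥0∞) (hp : 1 ≤ p) (hq : 1 ≤ q) (hpq : p⁻¹ + q⁻¹ = 1)
    (β₁ β₂ : ℝ) (hβ₁ : 0 ≤ β₁) (hβ₂ : 0 ≤ β₂)
    (hQnorm : ∀ i : Fin n, i.val / s = x → lpNorm p (Q i) ≤ β₁)
    (hKnorm : ∀ j : Fin n, j.val / s = y → lpNorm p (K j) ≤ β₁)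
    (hQdiff : ∀ i₁ i₂ : Fin n, i₁.val / s = x → i₂.val / s = x →
      lpNorm q (Q i₁ - Q i₂) ≤ β₂)
    (hKdiff : ∀ j₁ j₂ : Fin n, j₁.val / s = y → j₂.val / s = y →
      lpNorm q (K j₁ - K j₂) ≤ β₂)
    (r : ℝ) (hr : r = 2 * β₁ * β₂)
    (μstar μ : ℝ)
    (hμstar : μstar = (1 / (s : ℝ) ^ 2) *
      frobInner (blockMat n s x y) (Matrix.of fun i j => Real.exp (P i j)))
    (hμ : μ = Real.exp ((1 / (s : ℝ) ^ 2) * frobInner (blockMat n s x y) P)) :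
    (∃ a : ℝ, ∀ i j : Fin n, i.val / s = x → j.val / s = y →
        P i j ∈ Set.Icc a (a + r)) ∧
    0 ≤ μstar - μ ∧
    μstar - μ ≤ (1 + Real.exp r - 2 * Real.exp (r / 2)) * μ :=
  mu_approx_error_bound_general n d Q K P hP s x y hx hy p q hpq β₁ β₂ hQnorm hKnorm hQdiff hKdiff r
    hr μstar μ hμstar hμ
end

section
/- Let f : ℝ → ℝ be convex, let a ≤ b be real numbers, and let x₁, …, x_k ∈ [a, b] with k ≥ 1. Then (1/k) ∑_{i=1}^k f(x_i) − f((1/k) ∑_{i=1}^k x_i) ≤ f(a) + f(b) − 2 f((a + b)/2). -/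
/-!
The chord `y ↦ f a + slope f a b * (y - a)` lies above `f` on `[a, b]` and is affine, so an
average of values of `f` is at most the chord at the mean `m`. The chord values at `m` and at the
reflected point `a + b - m` add up to `f a + f b`, while midpoint convexity gives
`2 f ((a + b) / 2) ≤ f m + f (a + b - m)`; together these bound the gap by
`f a + f b - 2 f ((a + b) / 2)`.
-/

open Set

namespace ConvexOn

variable {f : ℝ → ℝ} {a b : ℝ}

theorem le_slope_mul_add (hf : ConvexOn ℝ (Icc a b) f) {y : ℝ} (hy : y ∈ Icc a b) :
    f y ≤ f a + slope f a b * (y - a) := by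
  obtain rfl | hay := eq_or_lt_of_le hy.1
  · simp
  have hab : a ≤ b := hy.1.trans hy.2
  have hsecant := hf.secant_mono (left_mem_Icc.2 hab) hy (right_mem_Icc.2 hab) hay.ne'
    (hay.trans_le hy.2).ne' hy.2
  rw [div_le_iff₀ (sub_pos.2 hay)] at hsecant
  rw [slope_def_field]
  linarith

theorem sum_mul_le_slope_mul_add {ι : Type*} {t : Finset ι} {w x : ι → ℝ}
    (hf : ConvexOn ℝ (Icc a b) f) (hw₀ : ∀ i ∈ t, 0 ≤ w i) (hw₁ : ∑ i ∈ t, w i = 1)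
    (hx : ∀ i ∈ t, x i ∈ Icc a b) :
    ∑ i ∈ t, w i * f (x i) ≤ f a + slope f a b * (∑ i ∈ t, w i * x i - a) :=
  calc ∑ i ∈ t, w i * f (x i) ≤ ∑ i ∈ t, w i * (f a + slope f a b * (x i - a)) :=
        Finset.sum_le_sum fun i hi =>
          mul_le_mul_of_nonneg_left (hf.le_slope_mul_add (hx i hi)) (hw₀ i hi)
    _ = (∑ i ∈ t, w i) * (f a - slope f a b * a) + slope f a b * ∑ i ∈ t, w i * x i := by
        rw [Finset.sum_mul, Finset.mul_sum, ← Finset.sum_add_distrib]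
        exact Finset.sum_congr rfl fun i _ => by ring
    _ = f a + slope f a b * (∑ i ∈ t, w i * x i - a) := by rw [hw₁]; ring

theorem two_mul_map_midpoint_le (hf : ConvexOn ℝ (Icc a b) f) {y : ℝ} (hy : y ∈ Icc a b) :
    2 * f ((a + b) / 2) ≤ f y + f (a + b - y) := by
  have hy' : a + b - y ∈ Icc a b := ⟨by linarith [hy.2], by linarith [hy.1]⟩
  have hmid := hf.2 hy hy' (by norm_num : (0 : ℝ) ≤ 1 / 2) (by norm_num : (0 : ℝ) ≤ 1 / 2)
    (by norm_num)
  simp only [smul_eq_mul] at hmid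
  rw [show 1 / 2 * y + 1 / 2 * (a + b - y) = (a + b) / 2 by ring] at hmid
  linarith

theorem slope_mul_add_sub_le (hf : ConvexOn ℝ (Icc a b) f) {y : ℝ} (hy : y ∈ Icc a b) :
    f a + slope f a b * (y - a) - f y ≤ f a + f b - 2 * f ((a + b) / 2) := by
  have hy' : a + b - y ∈ Icc a b := ⟨by linarith [hy.2], by linarith [hy.1]⟩
  have hreflect := hf.le_slope_mul_add hy'
  have hmid := hf.two_mul_map_midpoint_le hy
  have hslope : (b - a) * slope f a b = f b - f a := sub_smul_slope f a b
  linarith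

theorem sum_mul_sub_map_sum_le {ι : Type*} {t : Finset ι} {w x : ι → ℝ}
    (hf : ConvexOn ℝ (Icc a b) f) (hw₀ : ∀ i ∈ t, 0 ≤ w i) (hw₁ : ∑ i ∈ t, w i = 1)
    (hx : ∀ i ∈ t, x i ∈ Icc a b) :
    ∑ i ∈ t, w i * f (x i) - f (∑ i ∈ t, w i * x i) ≤ f a + f b - 2 * f ((a + b) / 2) := by
  have hmean : ∑ i ∈ t, w i * x i ∈ Icc a b := by
    simpa only [smul_eq_mul] using (convex_Icc a b).sum_mem hw₀ hw₁ hx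
  linarith [hf.sum_mul_le_slope_mul_add hw₀ hw₁ hx, hf.slope_mul_add_sub_le hmean]

end ConvexOn

theorem jensen_gap_bound_general
    (f : ℝ → ℝ) (hf : ConvexOn ℝ Set.univ f)
    (a b : ℝ)
    (k : ℕ) (hk : 0 < k) (x : Fin k → ℝ)
    (hx : ∀ i, x i ∈ Set.Icc a b) :
    (1 / (k : ℝ)) * ∑ i, f (x i) - f ((1 / (k : ℝ)) * ∑ i, x i) ≤
      f a + f b - 2 * f ((a + b) / 2) := by
  have hw₁ : ∑ _i : Fin k, 1 / (k : ℝ) = 1 := by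
    simp only [Finset.sum_const, Finset.card_univ, Fintype.card_fin, nsmul_eq_mul]
    field_simp
  rw [Finset.mul_sum, Finset.mul_sum]
  exact (hf.subset (subset_univ _) (convex_Icc a b)).sum_mul_sub_map_sum_le
    (fun _ _ => by positivity) hw₁ fun i _ => hx i

/-- Jensen-gap bound: for a convex function `f` and points `x₁, …, x_k ∈ [a, b]`,
`(1/k) ∑ f(xᵢ) − f((1/k) ∑ xᵢ) ≤ f(a) + f(b) − 2 f((a+b)/2)`. -/
theorem jensen_gap_bound
    (f : ℝ → ℝ) (hf : ConvexOn ℝ Set.univ f)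
    (a b : ℝ) (hab : a ≤ b)
    (k : ℕ) (hk : 0 < k) (x : Fin k → ℝ)
    (hx : ∀ i, x i ∈ Set.Icc a b) :
    (1 / (k : ℝ)) * ∑ i, f (x i) - f ((1 / (k : ℝ)) * ∑ i, x i) ≤
      f a + f b - 2 * f ((a + b) / 2) :=
  jensen_gap_bound_general f hf a b k hk x hx
end

section
/- Let r ≥ 0, a ∈ ℝ, and let x₁, …, x_k ∈ [a, a + r] with k ≥ 1. Set m = (1/k) ∑_{i=1}^k x_i. Then 0 ≤ (1/k) ∑_{i=1}^k exp(x_i) − exp(m) ≤ C_r · exp(m), where C_r = 1 + exp(r) − 2 exp(r/2). -/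
/-! For a convex `f` and points `pᵢ ∈ [a, b]` with mean `m`, the Jensen gap `∑ wᵢ f(pᵢ) - f(m)` is
at most the height of the chord of `f` over `[a, b]` above the graph at `m`. This height is a
concave function of `m` vanishing at `a` and `b`, hence at most twice its value at the midpoint,
which is `f a + f b - 2 f ((a + b) / 2)`. For `f = exp` on `[a, a + r]` this equals
`C_r exp a ≤ C_r exp m`, where `C_r = (exp (r / 2) - 1) ^ 2 ≥ 0`. -/

open Set

/-- `b - a` times the height of the chord of `f` over `[a, b]` above the graph at `x`; scaling
by `b - a` avoids dividing by it. -/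
def chordGap (f : ℝ → ℝ) (a b x : ℝ) : ℝ :=
  (b - x) * f a + (x - a) * f b - (b - a) * f x

namespace ConvexOn

variable {s : Set ℝ} {f : ℝ → ℝ} {a b x : ℝ}

theorem chordGap_nonneg (hf : ConvexOn ℝ s f) (ha : a ∈ s) (hb : b ∈ s) (hx : x ∈ Icc a b) :
    0 ≤ chordGap f a b x := by
  rw [chordGap, sub_nonneg]
  rcases hx.1.eq_or_lt with rfl | hax
  · simp
  rcases hx.2.eq_or_lt with rfl | hxb
  · simp
  exact hf.secant_mono_aux1 ha hb hax hxb

theorem map_midpoint_le (hf : ConvexOn ℝ s f) (ha : a ∈ s) (hb : b ∈ s) :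
    2 * f ((a + b) / 2) ≤ f a + f b := by
  have h := hf.2 ha hb (by norm_num : (0 : ℝ) ≤ 1 / 2) (by norm_num : (0 : ℝ) ≤ 1 / 2) (by norm_num)
  simp only [smul_eq_mul] at h
  rw [show 1 / 2 * a + 1 / 2 * b = (a + b) / 2 by ring] at h
  linarith

theorem chordGap_le_two_mul_chordGap_midpoint (hf : ConvexOn ℝ s f) (ha : a ∈ s) (hb : b ∈ s)
    (hx : x ∈ Icc a b) : chordGap f a b x ≤ 2 * chordGap f a b ((a + b) / 2) := by
  have hxs : x ∈ s := hf.1.ordConnected.out ha hb hx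
  have hmid := hf.map_midpoint_le ha hb
  simp only [chordGap]
  -- The midpoint lies between `x` and the endpoint farther from it.
  rcases le_total x ((a + b) / 2) with hxc | hcx
  · have h := hf.chordGap_nonneg hxs hb ⟨hxc, by linarith [hx.1, hx.2]⟩
    rw [chordGap] at h
    nlinarith [mul_le_mul_of_nonneg_left hmid (sub_nonneg.2 hx.1)]
  · have h := hf.chordGap_nonneg ha hxs ⟨by linarith [hx.1, hx.2], hcx⟩
    rw [chordGap] at h
    nlinarith [mul_le_mul_of_nonneg_left hmid (sub_nonneg.2 hx.2)]

theorem jensen_gap_le {ι : Type*} {t : Finset ι} {w p : ι → ℝ} (hf : ConvexOn ℝ s f)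
    (ha : a ∈ s) (hb : b ∈ s) (hw₀ : ∀ i ∈ t, 0 ≤ w i) (hw₁ : ∑ i ∈ t, w i = 1)
    (hp : ∀ i ∈ t, p i ∈ Icc a b) :
    ∑ i ∈ t, w i • f (p i) - f (∑ i ∈ t, w i • p i) ≤ f a + f b - 2 * f ((a + b) / 2) := by
  obtain ⟨j, hj⟩ := Finset.nonempty_of_sum_ne_zero (hw₁ ▸ one_ne_zero)
  rcases ((hp j hj).1.trans (hp j hj).2).eq_or_lt with rfl | hab
  · have hpa : ∀ i ∈ t, p i = a := fun i hi => le_antisymm (hp i hi).2 (hp i hi).1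
    have hconst (g : ℝ → ℝ) : ∑ i ∈ t, w i • g (p i) = g a := by
      rw [Finset.sum_congr rfl fun i hi => by rw [hpa i hi], ← Finset.sum_smul, hw₁, one_smul]
    rw [hconst f, show ∑ i ∈ t, w i • p i = a from hconst id, add_self_div_two]
    linarith
  set m := ∑ i ∈ t, w i • p i
  have hm : m ∈ Icc a b := (convex_Icc a b).sum_mem hw₀ hw₁ hp
  have hchord : (b - a) * ∑ i ∈ t, w i • f (p i) ≤ (b - m) * f a + (m - a) * f b :=
    calc (b - a) * ∑ i ∈ t, w i • f (p i) = ∑ i ∈ t, w i * ((b - a) * f (p i)) := by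
          rw [Finset.mul_sum]; exact Finset.sum_congr rfl fun i _ => by rw [smul_eq_mul]; ring
      _ ≤ ∑ i ∈ t, w i * ((b - p i) * f a + (p i - a) * f b) := by
          refine Finset.sum_le_sum fun i hi => mul_le_mul_of_nonneg_left ?_ (hw₀ i hi)
          have := hf.chordGap_nonneg ha hb (hp i hi)
          rw [chordGap] at this
          linarith
      _ = (b - m) * f a + (m - a) * f b := by
          simp only [m, smul_eq_mul, mul_add, ← mul_assoc, mul_sub, Finset.sum_add_distrib,
            Finset.sum_sub_distrib, ← Finset.sum_mul, hw₁]
          ring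
  refine le_of_mul_le_mul_left ?_ (sub_pos.2 hab)
  calc (b - a) * (∑ i ∈ t, w i • f (p i) - f m) ≤ chordGap f a b m := by
        rw [chordGap]; linarith
    _ ≤ 2 * chordGap f a b ((a + b) / 2) := hf.chordGap_le_two_mul_chordGap_midpoint ha hb hm
    _ = (b - a) * (f a + f b - 2 * f ((a + b) / 2)) := by rw [chordGap]; ring

end ConvexOn

theorem exp_jensen_gap_general
    (r : ℝ) (a : ℝ)
    (k : ℕ) (hk : 0 < k) (x : Fin k → ℝ)
    (hx : ∀ i, x i ∈ Set.Icc a (a + r))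
    (m : ℝ) (hm : m = (1 / (k : ℝ)) * ∑ i, x i) :
    0 ≤ (1 / (k : ℝ)) * ∑ i, Real.exp (x i) - Real.exp m ∧
    (1 / (k : ℝ)) * ∑ i, Real.exp (x i) - Real.exp m ≤
      (1 + Real.exp r - 2 * Real.exp (r / 2)) * Real.exp m := by
  set w : Fin k → ℝ := fun _ => 1 / k
  have hw₀ : ∀ i ∈ Finset.univ, 0 ≤ w i := fun _ _ => by positivity
  have hw₁ : ∑ i, w i = 1 := by simp [w, hk.ne']
  have hmean (g : ℝ → ℝ) : 1 / (k : ℝ) * ∑ i, g (x i) = ∑ i, w i • g (x i) := by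
    simp only [Finset.mul_sum, smul_eq_mul, w]
  have hm' : m = ∑ i, w i • x i := hm.trans (hmean id)
  have hma : a ≤ m := hm' ▸ ((convex_Icc a (a + r)).sum_mem hw₀ hw₁ fun i _ => hx i).1
  have hC : 1 + Real.exp r - 2 * Real.exp (r / 2) = (Real.exp (r / 2) - 1) ^ 2 := by
    rw [sub_sq, ← Real.exp_nat_mul]; ring_nf
  rw [hmean Real.exp, hm']
  refine ⟨sub_nonneg.2 (convexOn_exp.map_sum_le hw₀ hw₁ fun i _ => mem_univ _), ?_⟩
  calc _ ≤ Real.exp a + Real.exp (a + r) - 2 * Real.exp ((a + (a + r)) / 2) :=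
        convexOn_exp.jensen_gap_le (mem_univ a) (mem_univ (a + r)) hw₀ hw₁ fun i _ => hx i
    _ = (Real.exp (r / 2) - 1) ^ 2 * Real.exp a := by
        rw [← hC, show (a + (a + r)) / 2 = a + r / 2 by ring, Real.exp_add, Real.exp_add]; ring
    _ ≤ (1 + Real.exp r - 2 * Real.exp (r / 2)) * Real.exp (∑ i, w i • x i) := by
        rw [hC, ← hm']
        gcongr

/-- For `x₁, …, x_k ∈ [a, a + r]` with mean `m`,
`0 ≤ (1/k) ∑ exp(xᵢ) − exp(m) ≤ C_r exp(m)` where `C_r = 1 + exp(r) − 2 exp(r/2)`. -/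
theorem exp_jensen_gap
    (r : ℝ) (hr : 0 ≤ r) (a : ℝ)
    (k : ℕ) (hk : 0 < k) (x : Fin k → ℝ)
    (hx : ∀ i, x i ∈ Set.Icc a (a + r))
    (m : ℝ) (hm : m = (1 / (k : ℝ)) * ∑ i, x i) :
    0 ≤ (1 / (k : ℝ)) * ∑ i, Real.exp (x i) - Real.exp m ∧
    (1 / (k : ℝ)) * ∑ i, Real.exp (x i) - Real.exp m ≤
      (1 + Real.exp r - 2 * Real.exp (r / 2)) * Real.exp m :=
  exp_jensen_gap_general r a k hk x hx m hm
end

section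
/- Let r ≥ 0, a ∈ ℝ, and let x₁, …, x_k ∈ [a, a + r] with k ≥ 1. Set m = (1/k) ∑_{i=1}^k x_i. Then (1/k) ∑_{i=1}^k exp(2 x_i) − exp(2m) ≤ C_{2r} · exp(2m), where C_{2r} = 1 + exp(2r) − 2 exp(r). -/
open scoped BigOperators

private lemma exp_upper_cubic {r : ℝ} (hr : 0 ≤ r) (h1 : r ≤ 1) :
    Real.exp r ≤ 1 + r + r ^ 2 / 2 + (2 / 9) * r ^ 3 := by
  have h := Real.exp_bound' hr h1 (n := 3) (by norm_num)
  have hs : ∑ m ∈ Finset.range 3, r ^ m / m.factorial = 1 + r + r ^ 2 / 2 := by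
    simp [Finset.sum_range_succ, Nat.factorial]
  rw [hs] at h
  norm_num [Nat.factorial] at h
  linarith

private lemma key_ineq (r : ℝ) (hr : 0 < r) (t : ℝ) (ht0 : 0 ≤ t) (ht : t ≤ 2 * r) :
    1 + (Real.exp (2 * r) - 1) / (2 * r) * t ≤
      (2 + Real.exp (2 * r) - 2 * Real.exp r) * Real.exp t := by
  set u := Real.exp r with hu
  have hu1 : 1 ≤ u := Real.one_le_exp hr.le
  have hu2 : Real.exp (2 * r) = u ^ 2 := by
    rw [two_mul, Real.exp_add]; ring
  have h2r : (0 : ℝ) < 2 * r := by linarith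
  rw [hu2]
  have hgoal : 1 + (u ^ 2 - 1) / (2 * r) * t ≤ (2 + u ^ 2 - 2 * u) * Real.exp t := by
    rcases le_or_gt r 1 with h1 | h1
    · -- small r : use exp t ≥ 1 + t + t²/2
      have hU : u ≤ 1 + r + r ^ 2 / 2 + (2 / 9) * r ^ 3 := exp_upper_cubic hr.le h1
      have he1 : u ^ 2 - 1 - 2 * r * (u ^ 2 - u + 1) ≤ 0 := by
        nlinarith [mul_nonneg (sub_nonneg.2 hU) (sub_nonneg.2 hu1), sq_nonneg (u - 1),
          mul_nonneg (sub_nonneg.2 hU) hr.le, mul_nonneg hr.le hr.le,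
          mul_nonneg (mul_nonneg hr.le hr.le) hr.le, sub_nonneg.2 h1, sub_nonneg.2 hu1]
      have het : 1 + t + t ^ 2 / 2 ≤ Real.exp t := Real.quadratic_le_exp_of_nonneg ht0
      have step : (u ^ 2 - 1) * t / (2 * r) ≤ (2 + u ^ 2 - 2 * u) * (1 + t + t ^ 2 / 2) - 1 := by
        rw [div_le_iff₀ h2r]
        nlinarith [mul_nonneg (neg_nonneg.2 he1) ht0, sq_nonneg (u - 1 - t),
          mul_nonneg hr.le (sq_nonneg (u - 1)),
          mul_nonneg (mul_nonneg hr.le (sq_nonneg (u - 1))) (sq_nonneg t)]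
      have hK0 : 0 ≤ 2 + u ^ 2 - 2 * u := by nlinarith [sq_nonneg (u - 1)]
      have hdiv : (u ^ 2 - 1) / (2 * r) * t = (u ^ 2 - 1) * t / (2 * r) := by ring
      calc 1 + (u ^ 2 - 1) / (2 * r) * t
          ≤ (2 + u ^ 2 - 2 * u) * (1 + t + t ^ 2 / 2) := by rw [hdiv]; linarith
        _ ≤ (2 + u ^ 2 - 2 * u) * Real.exp t := by
            exact mul_le_mul_of_nonneg_left het hK0
    · -- large r
      have hue : Real.exp 1 ≤ u := Real.exp_le_exp.2 h1.le
      have he : (2.7182818283 : ℝ) < Real.exp 1 := Real.exp_one_gt_d9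
      have hB1 : (u ^ 2 - 1) / (2 * r) ≤ (u ^ 2 - 1) / 2 := by
        apply div_le_div_of_nonneg_left (by nlinarith) (by norm_num) (by linarith)
      have hB2 : (u ^ 2 - 1) / 2 ≤ Real.exp 1 * (u ^ 2 - 2 * u + 1) := by
        nlinarith [sq_nonneg (u - 1), mul_nonneg (sub_nonneg.2 hue) (sub_nonneg.2 hu1)]
      have het : Real.exp 1 * t ≤ Real.exp t := by
        have h := Real.add_one_le_exp (t - 1)
        have : Real.exp t = Real.exp 1 * Real.exp (t - 1) := by
          rw [← Real.exp_add]; ring_nf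
        rw [this]
        have : t ≤ Real.exp (t - 1) := by linarith
        nlinarith [Real.exp_pos (1 : ℝ)]
      have h1t : 1 ≤ Real.exp t := Real.one_le_exp ht0
      have hBt : (u ^ 2 - 1) / (2 * r) * t ≤ (u ^ 2 - 2 * u + 1) * Real.exp t := by
        calc (u ^ 2 - 1) / (2 * r) * t ≤ Real.exp 1 * (u ^ 2 - 2 * u + 1) * t := by
              apply mul_le_mul_of_nonneg_right _ ht0
              linarith
          _ = (u ^ 2 - 2 * u + 1) * (Real.exp 1 * t) := by ring
          _ ≤ (u ^ 2 - 2 * u + 1) * Real.exp t := by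
              exact mul_le_mul_of_nonneg_left het (by nlinarith [sq_nonneg (u - 1)])
      nlinarith [hBt, h1t]
  exact hgoal

/-- For `x₁, …, x_k ∈ [a, a + r]` with mean `m`,
`(1/k) ∑ exp(2 xᵢ) − exp(2m) ≤ C_{2r} exp(2m)` where `C_{2r} = 1 + exp(2r) − 2 exp(r)`. -/
theorem exp_two_jensen_gap
    (r : ℝ) (hr : 0 ≤ r) (a : ℝ)
    (k : ℕ) (hk : 0 < k) (x : Fin k → ℝ)
    (hx : ∀ i, x i ∈ Set.Icc a (a + r))
    (m : ℝ) (hm : m = (1 / (k : ℝ)) * ∑ i, x i) :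
    (1 / (k : ℝ)) * ∑ i, Real.exp (2 * x i) - Real.exp (2 * m) ≤
      (1 + Real.exp (2 * r) - 2 * Real.exp r) * Real.exp (2 * m) := by
  have hk0 : (0 : ℝ) < k := by exact_mod_cast hk
  rcases eq_or_lt_of_le hr with hr0 | hrpos
  · -- r = 0
    subst hm
    have hxa : ∀ i, x i = a := by
      intro i
      have h := hx i
      rw [← hr0] at h
      simpa using le_antisymm (by simpa using h.2) h.1
    simp only [hxa, ← hr0]
    rw [Finset.sum_const, Finset.sum_const, Finset.card_univ, Fintype.card_fin]
    simp only [nsmul_eq_mul]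
    have h1 : 1 / (k : ℝ) * ((k : ℝ) * a) = a := by field_simp
    have h2 : 1 / (k : ℝ) * ((k : ℝ) * Real.exp (2 * a)) = Real.exp (2 * a) := by field_simp
    rw [h1, h2]
    norm_num
  · -- r > 0
    set S := ∑ i, x i with hS
    have hSl : (k : ℝ) * a ≤ S := by
      have : ∑ _i : Fin k, a ≤ S := Finset.sum_le_sum fun i _ => (hx i).1
      simpa [Finset.sum_const, Finset.card_univ, mul_comm] using this
    have hSu : S ≤ (k : ℝ) * (a + r) := by
      have : S ≤ ∑ _i : Fin k, (a + r) := Finset.sum_le_sum fun i _ => (hx i).2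
      simpa [Finset.sum_const, Finset.card_univ, mul_comm, add_mul, mul_add] using this
    have hma : a ≤ m := by
      rw [hm]
      rw [div_mul_eq_mul_div, le_div_iff₀ hk0]; · linarith
    have hmu : m ≤ a + r := by
      rw [hm]
      rw [div_mul_eq_mul_div, div_le_iff₀ hk0]; · linarith
    -- chord bound for each i
    have chord : ∀ i, Real.exp (2 * x i) ≤
        Real.exp (2 * a) + (Real.exp (2 * a + 2 * r) - Real.exp (2 * a)) * ((x i - a) / r) := by
      intro i
      obtain ⟨hxl, hxu⟩ := hx i
      set θ := (x i - a) / r with hθ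
      have hθ0 : 0 ≤ θ := div_nonneg (by linarith) hrpos.le
      have hθ1 : θ ≤ 1 := (div_le_one hrpos).2 (by linarith)
      have h := convexOn_exp.2 (Set.mem_univ (2 * a)) (Set.mem_univ (2 * a + 2 * r))
        (by linarith : (0:ℝ) ≤ 1 - θ) hθ0 (by ring)
      simp only [smul_eq_mul] at h
      have harg : (1 - θ) * (2 * a) + θ * (2 * a + 2 * r) = 2 * x i := by
        rw [hθ]; field_simp; ring
      rw [harg] at h
      nlinarith [h]
    have hsum : ∑ i, Real.exp (2 * x i) ≤
        (k : ℝ) * Real.exp (2 * a) +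
          (Real.exp (2 * a + 2 * r) - Real.exp (2 * a)) * ((S - (k : ℝ) * a) / r) := by
      calc ∑ i, Real.exp (2 * x i)
          ≤ ∑ i, (Real.exp (2 * a) +
              (Real.exp (2 * a + 2 * r) - Real.exp (2 * a)) * ((x i - a) / r)) :=
            Finset.sum_le_sum fun i _ => chord i
        _ = (k : ℝ) * Real.exp (2 * a) +
              (Real.exp (2 * a + 2 * r) - Real.exp (2 * a)) * ((S - (k : ℝ) * a) / r) := by
            simp only [Finset.sum_add_distrib, Finset.sum_const, Finset.card_univ,
              Fintype.card_fin, nsmul_eq_mul, ← Finset.mul_sum, ← Finset.sum_div,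
              Finset.sum_sub_distrib, hS]
    -- mean version
    have hmean : (1 / (k : ℝ)) * ∑ i, Real.exp (2 * x i) ≤
        Real.exp (2 * a) * (1 + (Real.exp (2 * r) - 1) / (2 * r) * (2 * (m - a))) := by
      have h1 : (1 / (k : ℝ)) * ∑ i, Real.exp (2 * x i) ≤
          Real.exp (2 * a) + (Real.exp (2 * a + 2 * r) - Real.exp (2 * a)) * ((m - a) / r) := by
        have hmul := mul_le_mul_of_nonneg_left hsum (by positivity : (0:ℝ) ≤ 1 / (k : ℝ))
        have hma' : m - a = (S - (k : ℝ) * a) / (k : ℝ) := by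
          rw [hm]; field_simp
        calc (1 / (k : ℝ)) * ∑ i, Real.exp (2 * x i)
            ≤ (1 / (k : ℝ)) * ((k : ℝ) * Real.exp (2 * a) +
                (Real.exp (2 * a + 2 * r) - Real.exp (2 * a)) * ((S - (k : ℝ) * a) / r)) := hmul
          _ = Real.exp (2 * a) + (Real.exp (2 * a + 2 * r) - Real.exp (2 * a)) *
                ((m - a) / r) := by
              rw [hma']; field_simp
      have heq : Real.exp (2 * a) + (Real.exp (2 * a + 2 * r) - Real.exp (2 * a)) * ((m - a) / r)
          = Real.exp (2 * a) * (1 + (Real.exp (2 * r) - 1) / (2 * r) * (2 * (m - a))) := by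
        rw [Real.exp_add]
        field_simp
      linarith [h1, heq ▸ h1]
    -- apply key inequality with t = 2(m-a)
    have hkey := key_ineq r hrpos (2 * (m - a)) (by linarith) (by linarith)
    have hfin : (1 / (k : ℝ)) * ∑ i, Real.exp (2 * x i) ≤
        (2 + Real.exp (2 * r) - 2 * Real.exp r) * Real.exp (2 * m) := by
      have h2 : Real.exp (2 * a) * (1 + (Real.exp (2 * r) - 1) / (2 * r) * (2 * (m - a))) ≤
          Real.exp (2 * a) * ((2 + Real.exp (2 * r) - 2 * Real.exp r) *
            Real.exp (2 * (m - a))) :=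
        mul_le_mul_of_nonneg_left hkey (Real.exp_pos _).le
      have h3 : Real.exp (2 * a) * ((2 + Real.exp (2 * r) - 2 * Real.exp r) *
          Real.exp (2 * (m - a))) = (2 + Real.exp (2 * r) - 2 * Real.exp r) *
            Real.exp (2 * m) := by
        have h4 : 2 * (m - a) + 2 * a = 2 * m := by ring
        calc Real.exp (2 * a) * ((2 + Real.exp (2 * r) - 2 * Real.exp r) *
              Real.exp (2 * (m - a)))
            = (2 + Real.exp (2 * r) - 2 * Real.exp r) *
              (Real.exp (2 * (m - a)) * Real.exp (2 * a)) := by ring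
          _ = (2 + Real.exp (2 * r) - 2 * Real.exp r) *
              Real.exp (2 * (m - a) + 2 * a) := by rw [Real.exp_add]
          _ = (2 + Real.exp (2 * r) - 2 * Real.exp r) * Real.exp (2 * m) := by rw [h4]
      linarith [hmean, h3 ▸ h2]
    linarith [hfin]
end

section
/- Let I be the full collection of block components B^s_{x,y} over all scales s ∈ {1,2,4,…,n} and all translations x, y ∈ {1,…,n/s}, and let J ⊆ I. Define matrices E_s ∈ ℝ^{n×n} and coefficients α^s_{x,y} recursively: E_n = A, and for each scale s = n, n/2, …, 1, set α^s_{x,y} = (1/s²)⟨B^s_{x,y}, E_s⟩ for each B^s_{x,y} ∈ J at scale s, and E_{s/2} = E_s − ∑_{B^s_{x,y} ∈ J at scale s} α^s_{x,y} B^s_{x,y}. Let Â* = ∑_{B^s_{x,y} ∈ J} α^s_{x,y} B^s_{x,y}. Then for every entry (i, j): if at least one element of J is supported on (i, j), and (s, x, y) indexes the element of J supported on (i, j) with the smallest scale s (which is unique, since blocks at a fixed scale have disjoint supports), then (Â*)_{i,j} = μ*_{s,x,y} = (1/s²)⟨B^s_{x,y}, A⟩; if no element of J is supported on (i, j), then (Â*)_{i,j}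 = 0. -/
/-! Entry `(i, j)` of `Â*` is the sum of the coefficients `α` of the blocks of `J` covering
`(i, j)`. Unrolling the recursion, the residual at scale `s` is `A` minus the contributions of all
coarser blocks, and a coarser block either contains the finest covering block `B` or is disjoint
from it. Hence `s² α_B = ⟨B, A⟩ - s² · (sum of α over the coarser covering blocks)`, and adding
those coarser coefficients back to `α_B` leaves exactly the mean of `A` over `B`. -/

open scoped BigOperators

open Finset

theorem frobInner_sub {n : ℕ} (M A B : Matrix (Fin n) (Fin n) ℝ) :
    frobInner M (A - B) = frobInner M A - frobInner M B := by
  simp [frobInner, mul_sub]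

theorem frobInner_smul {n : ℕ} (M A : Matrix (Fin n) (Fin n) ℝ) (c : ℝ) :
    frobInner M (c • A) = c * frobInner M A := by
  simp [frobInner, mul_sum, mul_left_comm]

theorem frobInner_sum {n : ℕ} {ι : Type*} (M : Matrix (Fin n) (Fin n) ℝ) (s : Finset ι)
    (f : ι → Matrix (Fin n) (Fin n) ℝ) :
    frobInner M (∑ k ∈ s, f k) = ∑ k ∈ s, frobInner M (f k) := by
  simp only [frobInner, Matrix.sum_apply, mul_sum]
  calc _ = ∑ i, ∑ k ∈ s, ∑ j, M i j * f k i j := Finset.sum_congr rfl fun _ _ => Finset.sum_comm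
    _ = _ := Finset.sum_comm

theorem sum_ite_val_div_eq {n s x : ℕ} (hs : 0 < s) (hx : (x + 1) * s ≤ n) :
    ∑ a : Fin n, (if a.val / s = x then (1 : ℝ) else 0) = s := by
  rw [Fin.sum_univ_eq_sum_range (fun a : ℕ => if a / s = x then (1 : ℝ) else 0), sum_boole]
  have hIco : {a ∈ range n | a / s = x} = Ico (x * s) (x * s + s) := by
    ext a
    rw [add_one_mul] at hx
    simp only [mem_filter, mem_range, mem_Ico, Nat.div_eq_iff hs]
    omega
  rw [hIco, Nat.card_Ico, Nat.add_sub_cancel_left]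

theorem sum_sum_blockMat {n s x y : ℕ} (hs : 0 < s) (hx : (x + 1) * s ≤ n)
    (hy : (y + 1) * s ≤ n) :
    ∑ a, ∑ b, blockMat n s x y a b = (s : ℝ) ^ 2 := by
  have hprod : ∀ a b : Fin n, blockMat n s x y a b =
      (if a.val / s = x then (1 : ℝ) else 0) * (if b.val / s = y then (1 : ℝ) else 0) := by
    simp only [blockMat, Matrix.of_apply, ite_zero_mul_ite_zero, mul_one, implies_true]
  simp only [hprod, ← mul_sum, ← sum_mul, sum_ite_val_div_eq hs hx, sum_ite_val_div_eq hs hy, sq]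

theorem Nat.div_add_one_mul_le_of_dvd {a n s : ℕ} (hsn : s ∣ n) (ha : a < n) :
    (a / s + 1) * s ≤ n :=
  calc (a / s + 1) * s ≤ n / s * s := Nat.mul_le_mul_right _ (Nat.div_lt_div_of_lt_of_dvd hsn ha)
    _ = n := Nat.div_mul_cancel hsn

theorem Nat.div_eq_div_of_dvd_of_div_eq_div {a b s s' : ℕ} (h : s ∣ s') (hab : a / s = b / s) :
    a / s' = b / s' := by
  obtain ⟨k, rfl⟩ := h
  rw [← Nat.div_div_eq_div_mul, ← Nat.div_div_eq_div_mul, hab]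

theorem frobInner_blockMat_of_dvd {n s s' : ℕ} (hs : 0 < s) (hsn : s ∣ n) (hss' : s ∣ s')
    (i j : Fin n) (x y : ℕ) :
    frobInner (blockMat n s (i.val / s) (j.val / s)) (blockMat n s' x y) =
      if i.val / s' = x ∧ j.val / s' = y then (s : ℝ) ^ 2 else 0 := by
  have hentry : ∀ a b : Fin n, blockMat n s (i.val / s) (j.val / s) a b * blockMat n s' x y a b =
      if i.val / s' = x ∧ j.val / s' = y then blockMat n s (i.val / s) (j.val / s) a b else 0 := by
    intro a b
    simp only [blockMat, Matrix.of_apply]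
    by_cases hab : a.val / s = i.val / s ∧ b.val / s = j.val / s
    · simp [hab, Nat.div_eq_div_of_dvd_of_div_eq_div hss' hab.1,
        Nat.div_eq_div_of_dvd_of_div_eq_div hss' hab.2]
    · simp [hab]
  simp only [frobInner, hentry]
  split_ifs
  · exact sum_sum_blockMat hs (Nat.div_add_one_mul_le_of_dvd hsn i.isLt)
      (Nat.div_add_one_mul_le_of_dvd hsn j.isLt)
  · simp

theorem sum_smul_blockMat_apply {n : ℕ} {ι : Type*} (S : Finset ι) (c : ι → ℝ) (s x y : ι → ℕ)
    (i j : Fin n) :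
    (∑ p ∈ S, c p • blockMat n (s p) (x p) (y p)) i j =
      ∑ p ∈ S with i.val / s p = x p ∧ j.val / s p = y p, c p := by
  simp [Matrix.sum_apply, blockMat, sum_filter]

/-- `N < σ p + m` encodes `N - m < σ p` (the scales already peeled off) without truncated
subtraction. -/
theorem residual_eq_sub_sum {M ι : Type*} [AddCommGroup M] {N : ℕ} {J : Finset ι} {σ : ι → ℕ}
    {v : ι → M} {A : M} {E : ℕ → M} (hJN : ∀ p ∈ J, σ p ≤ N) (hE0 : E 0 = A)
    (hErec : ∀ m ≤ N, E (m + 1) = E m - ∑ p ∈ J with σ p = N - m, v p) :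
    ∀ m ≤ N + 1, E m = A - ∑ p ∈ J with N < σ p + m, v p
  | 0, _ => by
    rw [hE0, filter_false_of_mem fun p hp => by have := hJN p hp; omega, sum_empty, sub_zero]
  | m + 1, hm => by
    classical
    have hdisj : Disjoint {p ∈ J | N < σ p + m} {p ∈ J | σ p = N - m} :=
      disjoint_filter.2 fun p _ h1 h2 => by omega
    rw [hErec m (by omega), residual_eq_sub_sum hJN hE0 hErec m (by omega), sub_sub,
      ← sum_union hdisj]
    congr 2
    ext p
    by_cases hp : p ∈ J <;> simp only [mem_union, mem_filter, hp, true_and, false_and, or_false]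
    omega

theorem frobInner_blockMat_residual {n N t : ℕ} {J : Finset (ℕ × ℕ × ℕ)} {α : ℕ × ℕ × ℕ → ℝ}
    {A : Matrix (Fin n) (Fin n) ℝ} {E : ℕ → Matrix (Fin n) (Fin n) ℝ}
    (hJN : ∀ p ∈ J, p.1 ≤ N) (hE0 : E 0 = A)
    (hErec : ∀ m ≤ N, E (m + 1) = E m - ∑ p ∈ J with p.1 = N - m,
      α p • blockMat n (2 ^ p.1) p.2.1 p.2.2)
    (ht : t ≤ N) (htn : 2 ^ t ∣ n) (i j : Fin n) :
    frobInner (blockMat n (2 ^ t) (i.val / 2 ^ t) (j.val / 2 ^ t)) (E (N - t)) =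
      frobInner (blockMat n (2 ^ t) (i.val / 2 ^ t) (j.val / 2 ^ t)) A - ((2 : ℝ) ^ t) ^ 2 *
        ∑ p ∈ J with t < p.1 ∧ i.val / 2 ^ p.1 = p.2.1 ∧ j.val / 2 ^ p.1 = p.2.2, α p := by
  rw [residual_eq_sub_sum hJN hE0 hErec (N - t) (by omega), frobInner_sub, frobInner_sum,
    mul_sum, sum_filter, sum_filter]
  congr 1
  refine Finset.sum_congr rfl fun p _ => ?_
  by_cases htp : t < p.1
  · rw [if_pos (by omega), frobInner_smul,
      frobInner_blockMat_of_dvd (by positivity) htn (pow_dvd_pow 2 htp.le)]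
    simp only [htp, true_and, Nat.cast_pow, Nat.cast_ofNat]
    split_ifs <;> ring
  · rw [if_neg (by omega), if_neg (by tauto)]

theorem sum_covering_eq_add_coarser {t : ℕ} {J : Finset (ℕ × ℕ × ℕ)} {α : ℕ × ℕ × ℕ → ℝ}
    (i j : ℕ) (hmem : (t, i / 2 ^ t, j / 2 ^ t) ∈ J)
    (hmin : ∀ p ∈ J, i / 2 ^ p.1 = p.2.1 ∧ j / 2 ^ p.1 = p.2.2 → t ≤ p.1) :
    ∑ p ∈ J with i / 2 ^ p.1 = p.2.1 ∧ j / 2 ^ p.1 = p.2.2, α p =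
      α (t, i / 2 ^ t, j / 2 ^ t) +
        ∑ p ∈ J with t < p.1 ∧ i / 2 ^ p.1 = p.2.1 ∧ j / 2 ^ p.1 = p.2.2, α p := by
  rw [← add_sum_erase _ _ (mem_filter.2 ⟨hmem, rfl, rfl⟩)]
  congr 2
  ext ⟨s, x, y⟩
  simp only [mem_erase, mem_filter, ne_eq, Prod.mk.injEq]
  constructor
  · rintro ⟨hne, hp, rfl, rfl⟩
    exact ⟨hp, lt_of_le_of_ne (hmin _ hp ⟨rfl, rfl⟩) (by rintro rfl; exact hne ⟨rfl, rfl, rfl⟩),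
      rfl, rfl⟩
  · rintro ⟨hp, hlt, rfl, rfl⟩
    exact ⟨fun h => hlt.ne h.1.symm, hp, rfl, rfl⟩

/-- Components are coded as triples `(t, x, y)` standing for `B^{2^t}_{x,y}`, and `E` is indexed
from the top scale down: `E m` is the residual at scale `s = 2^(N−m)`, so `E 0 = E_n = A`. -/
theorem Ahat_star_entries_general
    (n N : ℕ) (hn : n = 2 ^ N)
    (A : Matrix (Fin n) (Fin n) ℝ)
    (J : Finset (ℕ × ℕ × ℕ))
    (hJ : ∀ txy ∈ J, txy.1 ≤ N ∧ txy.2.1 < n / 2 ^ txy.1 ∧ txy.2.2 < n / 2 ^ txy.1)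
    (E : ℕ → Matrix (Fin n) (Fin n) ℝ) (α : ℕ × ℕ × ℕ → ℝ)
    (hE0 : E 0 = A)
    (hα : ∀ txy ∈ J, α txy = (1 / ((2 : ℝ) ^ txy.1) ^ 2) *
      frobInner (blockMat n (2 ^ txy.1) txy.2.1 txy.2.2) (E (N - txy.1)))
    (hErec : ∀ m : ℕ, m ≤ N →
      E (m + 1) = E m - ∑ txy ∈ J.filter (fun txy => txy.1 = N - m),
        α txy • blockMat n (2 ^ txy.1) txy.2.1 txy.2.2)
    (Ahat : Matrix (Fin n) (Fin n) ℝ)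
    (hAhat : Ahat = ∑ txy ∈ J, α txy • blockMat n (2 ^ txy.1) txy.2.1 txy.2.2) :
    ∀ i j : Fin n,
      ((∀ txy ∈ J,
          ¬ (i.val / 2 ^ txy.1 = txy.2.1 ∧ j.val / 2 ^ txy.1 = txy.2.2)) →
        Ahat i j = 0) ∧
      (∀ txy ∈ J,
        (i.val / 2 ^ txy.1 = txy.2.1 ∧ j.val / 2 ^ txy.1 = txy.2.2) →
        (∀ txy' ∈ J,
          (i.val / 2 ^ txy'.1 = txy'.2.1 ∧ j.val / 2 ^ txy'.1 = txy'.2.2) →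
          txy.1 ≤ txy'.1) →
        Ahat i j = (1 / ((2 : ℝ) ^ txy.1) ^ 2) *
          frobInner (blockMat n (2 ^ txy.1) txy.2.1 txy.2.2) A) := by
  have hJN : ∀ p ∈ J, p.1 ≤ N := fun p hp => (hJ p hp).1
  intro i j
  have hAij : Ahat i j = ∑ p ∈ J with i.val / 2 ^ p.1 = p.2.1 ∧ j.val / 2 ^ p.1 = p.2.2, α p := by
    rw [hAhat, sum_smul_blockMat_apply]
  refine ⟨fun hnone => ?_, ?_⟩
  · rw [hAij, filter_false_of_mem hnone, sum_empty]
  · rintro ⟨t, x, y⟩ hmem ⟨hx, hy⟩ hmin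
    dsimp only at hx hy hmin ⊢
    subst hx hy
    have htN : t ≤ N := hJN _ hmem
    have hcoeff := hα _ hmem
    rw [frobInner_blockMat_residual hJN hE0 hErec htN (hn ▸ pow_dvd_pow 2 htN) i j] at hcoeff
    rw [hAij, sum_covering_eq_add_coarser i j hmem hmin, hcoeff]
    field_simp
    ring

/-- Entries of `Â* = ∑_{B ∈ J} α B` from the top-down residual decomposition:
components are coded as triples `(t, x, y)` representing `B^{2^t}_{x,y}`, `E` is indexed
from the top scale down (`E 0 = E_n = A`, the matrix at scale `s = 2^(N−m)` is `E m`),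
`α^s_{x,y} = (1/s²)⟨B^s_{x,y}, E_s⟩` and `E_{s/2} = E_s − ∑_{B^s_{x,y} ∈ J} α^s_{x,y} B^s_{x,y}`.
Then `(Â*)_{i,j} = μ*_{s,x,y} = (1/s²)⟨B^s_{x,y}, A⟩` where `(s, x, y)` indexes the element
of `J` supported on `(i, j)` with the smallest scale, and `(Â*)_{i,j} = 0` if no element of
`J` is supported on `(i, j)`. -/
theorem Ahat_star_entries
    (n d N : ℕ) (hn : n = 2 ^ N)
    (Q K : Matrix (Fin n) (Fin d) ℝ)
    (P : Matrix (Fin n) (Fin n) ℝ) (hP : P = Q * K.transpose)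
    (A : Matrix (Fin n) (Fin n) ℝ) (hA : A = Matrix.of fun i j => Real.exp (P i j))
    (J : Finset (ℕ × ℕ × ℕ))
    (hJ : ∀ txy ∈ J, txy.1 ≤ N ∧ txy.2.1 < n / 2 ^ txy.1 ∧ txy.2.2 < n / 2 ^ txy.1)
    (E : ℕ → Matrix (Fin n) (Fin n) ℝ) (α : ℕ × ℕ × ℕ → ℝ)
    (hE0 : E 0 = A)
    (hα : ∀ txy ∈ J, α txy = (1 / ((2 : ℝ) ^ txy.1) ^ 2) *
      frobInner (blockMat n (2 ^ txy.1) txy.2.1 txy.2.2) (E (N - txy.1)))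
    (hErec : ∀ m : ℕ, m ≤ N →
      E (m + 1) = E m - ∑ txy ∈ J.filter (fun txy => txy.1 = N - m),
        α txy • blockMat n (2 ^ txy.1) txy.2.1 txy.2.2)
    (Ahat : Matrix (Fin n) (Fin n) ℝ)
    (hAhat : Ahat = ∑ txy ∈ J, α txy • blockMat n (2 ^ txy.1) txy.2.1 txy.2.2) :
    ∀ i j : Fin n,
      ((∀ txy ∈ J,
          ¬ (i.val / 2 ^ txy.1 = txy.2.1 ∧ j.val / 2 ^ txy.1 = txy.2.2)) →
        Ahat i j = 0) ∧
      (∀ txy ∈ J,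
        (i.val / 2 ^ txy.1 = txy.2.1 ∧ j.val / 2 ^ txy.1 = txy.2.2) →
        (∀ txy' ∈ J,
          (i.val / 2 ^ txy'.1 = txy'.2.1 ∧ j.val / 2 ^ txy'.1 = txy'.2.2) →
          txy.1 ≤ txy'.1) →
        Ahat i j = (1 / ((2 : ℝ) ^ txy.1) ^ 2) *
          frobInner (blockMat n (2 ^ txy.1) txy.2.1 txy.2.2) A) :=
  Ahat_star_entries_general n N hn A J hJ E α hE0 hα hErec Ahat hAhat
end
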